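/- The coefficient of x^{-n+2} in the formal Laurent expansion of e^x/(e^x-1)^n equals (1/8)(n-3)(n - 4/3), for every integer n. -/

import Mathlib

/-!
Write `e^x - 1 = x·u`, where `u = (e^x - 1)/x = 1 + x/2 + x²/6 + …` is a unit of `ℚ⟦X⟧`. Then
`e^x/(e^x - 1)^n = x^(-n)·e^x·u^(-n)`, so the wanted coefficient is the coefficient of `x²` in
`e^x·u^(-n)`. For a unit `u = 1 + a x + b x² + …` and any integer `m`, induction on `m` gives
`u^m = 1 + m a x + (m b + m(m-1)/2 · a²) x² + …`.
-/

/-- `E = e^x` as a formal Laurent series over `ℚ`. -/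
noncomputable def E : LaurentSeries ℚ := HahnSeries.ofPowerSeries ℤ ℚ (PowerSeries.exp ℚ)

/-- `q n k` is the coefficient of `x^k` in the Laurent expansion of `e^x/(e^x-1)^n`. -/
noncomputable def q (n k : ℤ) : ℚ := (E * ((E - 1) ^ n)⁻¹).coeff k

open PowerSeries

namespace PowerSeries

theorem coeff_two_mul {R : Type*} [CommSemiring R] (φ ψ : R⟦X⟧) :
    coeff 2 (φ * ψ) =
      coeff 2 φ * constantCoeff ψ + coeff 1 φ * coeff 1 ψ + coeff 2 ψ * constantCoeff φ := by
  rw [coeff_mul, Finset.Nat.sum_antidiagonal_eq_sum_range_succ_mk, Finset.sum_range_succ,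
    Finset.sum_range_succ, Finset.sum_range_one, coeff_zero_eq_constantCoeff]
  ring

theorem coeff_units_zpow_of_constantCoeff_eq_one {K : Type*} [Field K] [CharZero K] (u : K⟦X⟧ˣ)
    (hu : constantCoeff (u : K⟦X⟧) = 1) (m : ℤ) :
    constantCoeff (↑(u ^ m) : K⟦X⟧) = 1 ∧
    coeff 1 (↑(u ^ m) : K⟦X⟧) = m * coeff 1 (u : K⟦X⟧) ∧
    coeff 2 (↑(u ^ m) : K⟦X⟧) =
      m * coeff 2 (u : K⟦X⟧) + m * (m - 1) / 2 * coeff 1 (u : K⟦X⟧) ^ 2 := by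
  induction m using Int.induction_on with
  | zero => simp
  | succ k ih =>
    obtain ⟨h0, h1, h2⟩ := ih
    simp only [zpow_add_one, Units.val_mul, map_mul, coeff_one_mul, coeff_two_mul, h0, h1, h2, hu]
    push_cast
    refine ⟨by ring, by ring, by ring⟩
  | pred k ih =>
    obtain ⟨h0, h1, h2⟩ := ih
    rw [← sub_add_cancel (-(k : ℤ)) 1, zpow_add_one, Units.val_mul] at h0 h1 h2
    simp only [map_mul, coeff_one_mul, coeff_two_mul, hu, mul_one] at h0 h1 h2
    rw [h0] at h1 h2
    push_cast at h1 h2 ⊢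
    have h1' : coeff 1 (↑(u ^ (-(k : ℤ) - 1)) : K⟦X⟧) = (-k - 1) * coeff 1 (u : K⟦X⟧) := by
      linear_combination h1
    rw [h1'] at h2
    exact ⟨h0, h1', by linear_combination h2⟩

end PowerSeries

open HahnSeries

theorem HahnSeries.ofPowerSeries_X_mul_zpow {K : Type*} [Field K] (w : K⟦X⟧ˣ) (n : ℤ) :
    ofPowerSeries ℤ K (X * (w : K⟦X⟧)) ^ n = single n 1 * ofPowerSeries ℤ K ↑(w ^ n) := by
  rw [map_mul, ofPowerSeries_X, mul_zpow, ← RatFunc.single_zpow]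
  congr 1
  have := Units.val_zpow_eq_zpow_val (Units.map (ofPowerSeries ℤ K).toMonoidHom w) n
  rw [← map_zpow] at this
  exact this.symm

noncomputable def expSubOneDivX : ℚ⟦X⟧ := mk fun p => coeff (p + 1) (exp ℚ)

theorem X_mul_expSubOneDivX : X * expSubOneDivX = exp ℚ - 1 := by
  rw [eq_sub_iff_add_eq, expSubOneDivX]
  conv_rhs => rw [eq_X_mul_shift_add_const (exp ℚ), constantCoeff_exp, map_one]

theorem constantCoeff_expSubOneDivX : constantCoeff expSubOneDivX = 1 := by
  simp [expSubOneDivX, coeff_exp]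

theorem coeff_one_expSubOneDivX : coeff 1 expSubOneDivX = 1 / 2 := by
  rw [expSubOneDivX, coeff_mk, coeff_exp]
  norm_num [Nat.factorial]

theorem coeff_two_expSubOneDivX : coeff 2 expSubOneDivX = 1 / 6 := by
  rw [expSubOneDivX, coeff_mk, coeff_exp]
  norm_num [Nat.factorial]

theorem isUnit_expSubOneDivX : IsUnit expSubOneDivX := by
  simp [isUnit_iff_constantCoeff, constantCoeff_expSubOneDivX]

theorem q_neg_add_eq_coeff {w : ℚ⟦X⟧ˣ} (hw : X * (w : ℚ⟦X⟧) = exp ℚ - 1) (n : ℤ) (k : ℕ) :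
    q n (-n + k) = coeff k (exp ℚ * (↑(w ^ (-n)) : ℚ⟦X⟧)) := by
  have hE : E - 1 = ofPowerSeries ℤ ℚ (X * (w : ℚ⟦X⟧)) := by rw [hw, map_sub, map_one, E]
  rw [q, ← zpow_neg, hE, ofPowerSeries_X_mul_zpow, E, mul_left_comm, ← map_mul,
    add_comm, coeff_single_mul_add, one_mul, ofPowerSeries_apply_coeff]

/-- The coefficient of `x^{-n+2}` in `e^x/(e^x-1)^n` is `(1/8)(n-3)(n-4/3)`. -/
theorem stmt8 (n : ℤ) :
    q n (-n + 2) = (1 / 8) * ((n : ℚ) - 3) * ((n : ℚ) - 4 / 3) := by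
  obtain ⟨u, hu⟩ := isUnit_expSubOneDivX
  obtain ⟨h0, h1, h2⟩ :=
    coeff_units_zpow_of_constantCoeff_eq_one u (hu ▸ constantCoeff_expSubOneDivX) (-n)
  simp only [hu, coeff_one_expSubOneDivX, coeff_two_expSubOneDivX] at h1 h2
  rw [← Nat.cast_ofNat, q_neg_add_eq_coeff (hu ▸ X_mul_expSubOneDivX), coeff_two_mul, h0, h1, h2,
    constantCoeff_exp]
  have coeff_one_exp : coeff 1 (exp ℚ) = 1 := by norm_num [coeff_exp]
  have coeff_two_exp : coeff 2 (exp ℚ) = 1 / 2 := by norm_num [coeff_exp, Nat.factorial]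
  rw [coeff_one_exp, coeff_two_exp]
  push_cast
  ring
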